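/- arXiv:2406.17730 — 3 statements merged into one kernel-verified Lean document; each statement's English description precedes it below -/
import Mathlib

section
/- Let A = (a₁, a₂, a₃, a₄) be a 1×4 matrix of positive integers admitting a gluing of the first kind. Suppose M = {b, c, d} is a minimal Markov basis of A with b = (b₁, −b₂, 0, 0), c = (c₁, c₂, −c₃, 0), d = (d₁, d₂, d₃, −d₄), where b₁, b₂, c₃, d₄ > 0, c₁, c₂, d₁, d₂, d₃ ≥ 0, and b₁ > b₂. Then M is distance reducing if and only if all of the following hold: (a) c₁ < c₂ + c₃; (b) (c₁ = 0 and c₃ < c₂) or d₁ + d₃ < d₂ + d₄; (c) c₁ + c₂ < c₃ or d₁ + d₂ < d₃ + d₄. -/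
open Pointwise

namespace DistRed

variable {n d : ℕ}

/-- Componentwise positive part `u⁺`. -/
def posP (u : Fin n → ℤ) : Fin n → ℤ := fun i => max (u i) 0

/-- Componentwise negative part `u⁻`. -/
def negP (u : Fin n → ℤ) : Fin n → ℤ := fun i => max (-u i) 0

/-- The 1-norm `‖u‖ = ∑ᵢ |uᵢ|`. -/
def onorm (u : Fin n → ℤ) : ℤ := ∑ i, |u i|

/-- Componentwise inequality of vectors. -/
def vle (u v : Fin n → ℤ) : Prop := ∀ i, u i ≤ v i

/-- The single move `u` reduces the 1-norm distance of `z = z⁺ - z⁻`. -/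
def reducesOne (u z : Fin n → ℤ) : Prop :=
  (vle (posP u) (posP z) ∧ onorm (z - u) < onorm z) ∨
  (vle (negP u) (posP z) ∧ onorm (z + u) < onorm z) ∨
  (vle (posP u) (negP z) ∧ onorm (z + u) < onorm z) ∨
  (vle (negP u) (negP z) ∧ onorm (z - u) < onorm z)

/-- `B` reduces the distance of `z`. -/
def reduces (B : Set (Fin n → ℤ)) (z : Fin n → ℤ) : Prop := ∃ u ∈ B, reducesOne u z

/-- `B` strongly reduces the distance of `z`. -/
def stronglyReduces (B : Set (Fin n → ℤ)) (z : Fin n → ℤ) : Prop :=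
  (∃ u ∈ B, (vle (posP u) (posP z) ∧ onorm (z - u) < onorm z) ∨
            (vle (negP u) (posP z) ∧ onorm (z + u) < onorm z)) ∧
  (∃ u ∈ B, (vle (posP u) (negP z) ∧ onorm (z + u) < onorm z) ∨
            (vle (negP u) (negP z) ∧ onorm (z - u) < onorm z))

/-- `B` is distance reducing relative to the kernel `K`. -/
def distanceReducing (K B : Set (Fin n → ℤ)) : Prop := ∀ z ∈ K, z ≠ 0 → reduces B z

/-- `B` is strongly distance reducing relative to the kernel `K`. -/
def stronglyDistanceReducing (K B : Set (Fin n → ℤ)) : Prop :=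
  ∀ z ∈ K, z ≠ 0 → stronglyReduces B z

/-- The Graver basis: nonzero elements of `K` with no proper conformal decomposition. -/
def graver (K : Set (Fin n → ℤ)) : Set (Fin n → ℤ) :=
  {z | z ∈ K ∧ z ≠ 0 ∧ ¬ ∃ u v, u ∈ K ∧ v ∈ K ∧ u ≠ 0 ∧ v ≠ 0 ∧ z = u + v ∧
      posP z = posP u + posP v ∧ negP z = negP u + negP v}

/-- `B` connects `x` and `y` through nonnegative points by moves in `B ∪ -B`. -/
def connects (B : Set (Fin n → ℤ)) (x y : Fin n → ℤ) : Prop :=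
  ∃ (k : ℕ) (f : Fin (k + 1) → Fin n → ℤ),
    f 0 = x ∧ f (Fin.last k) = y ∧ (∀ i j, 0 ≤ f i j) ∧
    ∀ i : Fin k, f i.succ - f i.castSucc ∈ B ∪ -B

/-- Kernel of an integer matrix. -/
def kerM (A : Matrix (Fin d) (Fin n) ℤ) : Set (Fin n → ℤ) := {u | A.mulVec u = 0}

/-- Markov basis of a matrix. -/
def isMarkovM (A : Matrix (Fin d) (Fin n) ℤ) (B : Set (Fin n → ℤ)) : Prop :=
  B ⊆ kerM A ∧ ∀ x y : Fin n → ℤ, (∀ j, 0 ≤ x j) → (∀ j, 0 ≤ y j) →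
    A.mulVec x = A.mulVec y → connects B x y

def isMinimalMarkovM (A : Matrix (Fin d) (Fin n) ℤ) (B : Set (Fin n → ℤ)) : Prop :=
  isMarkovM A B ∧ ∀ B' ⊂ B, ¬ isMarkovM A B'

/-- Kernel of the 1×n matrix `a`. -/
def kerV (a : Fin n → ℕ) : Set (Fin n → ℤ) := {u | ∑ i, (a i : ℤ) * u i = 0}

/-- Markov basis of a 1×n matrix. -/
def isMarkov (a : Fin n → ℕ) (B : Set (Fin n → ℤ)) : Prop :=
  B ⊆ kerV a ∧ ∀ x y : Fin n → ℤ, (∀ j, 0 ≤ x j) → (∀ j, 0 ≤ y j) →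
    (∑ i, (a i : ℤ) * x i) = (∑ i, (a i : ℤ) * y i) → connects B x y

def isMinimalMarkov (a : Fin n → ℕ) (B : Set (Fin n → ℤ)) : Prop :=
  isMarkov a B ∧ ∀ B' ⊂ B, ¬ isMarkov a B'

/-- The circuit `z_{i,j}` of the 1×n matrix `a`. -/
def circuit (a : Fin n → ℕ) (i j : Fin n) : Fin n → ℤ :=
  fun k => if k = i then ((a j / Nat.gcd (a i) (a j) : ℕ) : ℤ)
           else if k = j then -((a i / Nat.gcd (a i) (a j) : ℕ) : ℤ) else 0

/-- `B` reduces the distance of all circuits of `a`. -/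
def reducesCircuits (a : Fin n → ℕ) (B : Set (Fin n → ℤ)) : Prop :=
  ∀ i j : Fin n, i < j → reduces B (circuit a i j)

/-- `a` admits a gluing of the first kind. -/
def firstKind (a : Fin n → ℕ) : Prop :=
  ∀ k : Fin n, 1 ≤ k.val →
    ∃ lam : Fin n → ℕ, (∀ i, ¬ i < k → lam i = 0) ∧
      Nat.lcm ((Finset.univ.filter (fun i : Fin n => i < k)).gcd a) (a k) = ∑ i, lam i * a i

/-- Kernel of the submatrix of `a` indexed by `S`, as vectors supported on `S`. -/
def kerOn (a : Fin n → ℕ) (S : Finset (Fin n)) : Set (Fin n → ℤ) :=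
  {u | (∀ i, i ∉ S → u i = 0) ∧ ∑ i, (a i : ℤ) * u i = 0}

/-- `a` is glued along the pair of disjoint index sets `(S, T)`. -/
def gluedOn (a : Fin n → ℕ) (S T : Finset (Fin n)) : Prop :=
  ∃ z ∈ kerOn a (S ∪ T), (∀ i, 0 < z i → i ∈ S) ∧ (∀ i, z i < 0 → i ∈ T) ∧
    ∀ w ∈ kerOn a (S ∪ T), ∃! t : (Fin n → ℤ) × (Fin n → ℤ) × ℤ,
      t.1 ∈ kerOn a S ∧ t.2.1 ∈ kerOn a T ∧ w = t.1 + t.2.1 + t.2.2 • z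

/-- Complete intersection on the index set `S` (recursively defined via gluings). -/
inductive IsCIOn (a : Fin n → ℕ) : Finset (Fin n) → Prop
  | single (i : Fin n) : IsCIOn a {i}
  | glue {S T : Finset (Fin n)} (hS : S.Nonempty) (hT : T.Nonempty)
      (hd : Disjoint S T) (hg : gluedOn a S T) (cS : IsCIOn a S) (cT : IsCIOn a T) :
      IsCIOn a (S ∪ T)

/-- `a` is a complete intersection. -/
def isCI (a : Fin n → ℕ) : Prop := IsCIOn a Finset.univ

/-- Positive distance decomposition. -/
def posDD (K : Set (Fin n → ℤ)) (z : Fin n → ℤ) : Prop :=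
  ∃ u v, u ∈ K ∧ v ∈ K ∧ u ≠ 0 ∧ v ≠ 0 ∧ z = u + v ∧ vle (posP u) (posP z) ∧
    onorm v < onorm z

/-- Negative distance decomposition. -/
def negDD (K : Set (Fin n → ℤ)) (z : Fin n → ℤ) : Prop :=
  ∃ u v, u ∈ K ∧ v ∈ K ∧ u ≠ 0 ∧ v ≠ 0 ∧ z = u + v ∧ vle (negP u) (negP z) ∧
    onorm v < onorm z

def Dplus (K : Set (Fin n → ℤ)) : Set (Fin n → ℤ) := {z | z ∈ K ∧ z ≠ 0 ∧ ¬ posDD K z}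

def Dminus (K : Set (Fin n → ℤ)) : Set (Fin n → ℤ) := {z | z ∈ K ∧ z ≠ 0 ∧ ¬ negDD K z}

/-- The distance irreducible elements `D(A)`. -/
def Dboth (K : Set (Fin n → ℤ)) : Set (Fin n → ℤ) := Dplus K ∩ Dminus K

/-- The weakly distance irreducible elements `D^w(A)`. -/
def Dweak (K : Set (Fin n → ℤ)) : Set (Fin n → ℤ) := Dplus K ∪ Dminus K

/-- The indispensable set `S(A)`. -/
def indisp (K : Set (Fin n → ℤ)) : Set (Fin n → ℤ) :=
  {z | z ∈ K ∧ z ≠ 0 ∧ ¬ ∃ u v, u ∈ K ∧ v ∈ K ∧ u ≠ 0 ∧ v ≠ 0 ∧ z = u + v ∧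
      ∀ i, 0 < u i → 0 ≤ v i}

/-- Minimally distance reducing subset of `K`. -/
def minDistRed (K B : Set (Fin n → ℤ)) : Prop :=
  B ⊆ K ∧ distanceReducing K B ∧ ∀ B' ⊂ B, ¬ distanceReducing K B'

/-- Minimally strongly distance reducing subset of `K`. -/
def minStrongDistRed (K B : Set (Fin n → ℤ)) : Prop :=
  B ⊆ K ∧ stronglyDistanceReducing K B ∧ ∀ B' ⊂ B, ¬ stronglyDistanceReducing K B'



/-! ### Auxiliary lemmas -/

lemma aux_vle4 {u v : Fin 4 → ℤ} (h0 : u 0 ≤ v 0) (h1 : u 1 ≤ v 1) (h2 : u 2 ≤ v 2)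
    (h3 : u 3 ≤ v 3) : vle u v := by
  intro i; fin_cases i <;> assumption

lemma aux_onorm4 (w : Fin 4 → ℤ) : onorm w = |w 0| + |w 1| + |w 2| + |w 3| := by
  simp [onorm, Fin.sum_univ_four]

/-- b case 1: z₀ ≥ b₁. -/
lemma aux_LF1 {b₁ b₂ : ℤ} (hb₂ : 0 < b₂) (hb12 : b₂ < b₁) {z : Fin 4 → ℤ}
    (h : b₁ ≤ z 0) : reducesOne ![b₁, -b₂, 0, 0] z := by
  left
  constructor
  · refine aux_vle4 ?_ ?_ ?_ ?_ <;> simp [posP] <;> omega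
  · rw [aux_onorm4, aux_onorm4]
    simp only [Pi.sub_apply, Matrix.cons_val_zero, Matrix.cons_val_one, Matrix.head_cons,
      Matrix.cons_val_two, Matrix.tail_cons, Matrix.cons_val_three, sub_zero, sub_neg_eq_add]
    simp only [Int.abs_eq_natAbs]; omega

/-- c case 2: z₂ ≥ c₃, c₁+c₂<c₃. -/
lemma aux_LFC2 {c₁ c₂ c₃ : ℤ} (hc₁ : 0 ≤ c₁) (hc₂ : 0 ≤ c₂) (hC : c₁ + c₂ < c₃)
    {z : Fin 4 → ℤ} (h : c₃ ≤ z 2) : reducesOne ![c₁, c₂, -c₃, 0] z := by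
  right; left
  constructor
  · refine aux_vle4 ?_ ?_ ?_ ?_ <;> simp [negP, posP] <;> omega
  · rw [aux_onorm4, aux_onorm4]
    simp only [Pi.add_apply, Matrix.cons_val_zero, Matrix.cons_val_one, Matrix.head_cons,
      Matrix.cons_val_two, Matrix.tail_cons, Matrix.cons_val_three, add_zero]
    simp only [Int.abs_eq_natAbs]; omega

/-- c case 1 with c₁ = 0, c₃ < c₂, z₁ ≥ c₂. -/
lemma aux_LFC1 {c₁ c₂ c₃ : ℤ} (hc₁ : c₁ = 0) (hc₃ : 0 < c₃) (h32 : c₃ < c₂)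
    {z : Fin 4 → ℤ} (h : c₂ ≤ z 1) : reducesOne ![c₁, c₂, -c₃, 0] z := by
  left
  constructor
  · refine aux_vle4 ?_ ?_ ?_ ?_ <;> simp [posP, hc₁] <;> omega
  · rw [aux_onorm4, aux_onorm4]
    simp only [Pi.sub_apply, Matrix.cons_val_zero, Matrix.cons_val_one, Matrix.head_cons,
      Matrix.cons_val_two, Matrix.tail_cons, Matrix.cons_val_three, sub_zero, sub_neg_eq_add, hc₁]
    simp only [Int.abs_eq_natAbs]; omega

/-- c case 4: z₂ ≤ -c₃, plus norm estimate. -/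
lemma aux_LFC4 {c₁ c₂ c₃ : ℤ} (hc₁ : 0 ≤ c₁) (hc₂ : 0 ≤ c₂)
    {z : Fin 4 → ℤ} (h : z 2 ≤ -c₃)
    (hk : |z 0 - c₁| + |z 1 - c₂| < |z 0| + |z 1| + c₃) : reducesOne ![c₁, c₂, -c₃, 0] z := by
  right; right; right
  constructor
  · refine aux_vle4 ?_ ?_ ?_ ?_ <;> simp [negP] <;> omega
  · rw [aux_onorm4, aux_onorm4]
    simp only [Pi.sub_apply, Matrix.cons_val_zero, Matrix.cons_val_one, Matrix.head_cons,
      Matrix.cons_val_two, Matrix.tail_cons, Matrix.cons_val_three, sub_zero, sub_neg_eq_add]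
    simp only [Int.abs_eq_natAbs] at *; omega

/-- d case 4: z₃ ≤ -d₄, plus norm estimate. -/
lemma aux_LFD4 {d₁ d₂ d₃ d₄ : ℤ} (hd₁ : 0 ≤ d₁) (hd₂ : 0 ≤ d₂) (hd₃ : 0 ≤ d₃)
    {z : Fin 4 → ℤ} (h : z 3 ≤ -d₄)
    (hk : |z 0 - d₁| + |z 1 - d₂| + |z 2 - d₃| < |z 0| + |z 1| + |z 2| + d₄) :
    reducesOne ![d₁, d₂, d₃, -d₄] z := by
  right; right; right
  constructor
  · refine aux_vle4 ?_ ?_ ?_ ?_ <;> simp [negP] <;> omega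
  · rw [aux_onorm4, aux_onorm4]
    simp only [Pi.sub_apply, Matrix.cons_val_zero, Matrix.cons_val_one, Matrix.head_cons,
      Matrix.cons_val_two, Matrix.tail_cons, Matrix.cons_val_three, sub_neg_eq_add]
    simp only [Int.abs_eq_natAbs] at *; omega

lemma aux_reducesOne_neg {m : ℕ} {u z : Fin m → ℤ} (h : reducesOne u (-z)) :
    reducesOne u z := by
  have hpn : posP (-z) = negP z := by funext i; simp [posP, negP]
  have hnp : negP (-z) = posP z := by funext i; simp [posP, negP]
  have hon : onorm (-z) = onorm z := by simp [onorm, Pi.neg_apply]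
  have hsub : ∀ u : Fin m → ℤ, onorm (-z - u) = onorm (z + u) := by
    intro u; simp only [onorm]; apply Finset.sum_congr rfl; intro i _
    simp only [Pi.sub_apply, Pi.add_apply, Pi.neg_apply]
    rw [show -z i - u i = -(z i + u i) by ring, abs_neg]
  have hadd : ∀ u : Fin m → ℤ, onorm (-z + u) = onorm (z - u) := by
    intro u; simp only [onorm]; apply Finset.sum_congr rfl; intro i _
    simp only [Pi.sub_apply, Pi.add_apply, Pi.neg_apply]
    rw [show -z i + u i = -(z i - u i) by ring, abs_neg]
  unfold reducesOne at h ⊢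
  rw [hpn, hnp, hon, hsub, hadd] at h
  tauto

lemma aux_mul_ge_one_nonneg {x y : ℤ} (hx : 1 ≤ x) (hy : 0 ≤ y) : y ≤ x * y := by nlinarith
lemma aux_mul_le_neg_one {x y : ℤ} (hx : x ≤ -1) (hy : 0 ≤ y) : y ≤ -(x * y) := by nlinarith

lemma aux_keyHalf {b₁ b₂ c₁ c₂ c₃ d₁ d₂ d₃ d₄ : ℤ}
    (hb₁ : 0 < b₁) (hb₂ : 0 < b₂) (hc₃ : 0 < c₃) (hd₄ : 0 < d₄)
    (hc₁ : 0 ≤ c₁) (hc₂ : 0 ≤ c₂) (hd₁ : 0 ≤ d₁) (hd₂ : 0 ≤ d₂) (hd₃ : 0 ≤ d₃)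
    (hb12 : b₂ < b₁)
    (hA : c₁ < c₂ + c₃)
    (hB : (c₁ = 0 ∧ c₃ < c₂) ∨ d₁ + d₃ < d₂ + d₄)
    (hC : c₁ + c₂ < c₃ ∨ d₁ + d₂ < d₃ + d₄)
    (α β γ : ℤ) (z : Fin 4 → ℤ)
    (h0 : z 0 = α * b₁ + β * c₁ + γ * d₁)
    (h1 : z 1 = -(α * b₂) + β * c₂ + γ * d₂)
    (h2 : z 2 = -(β * c₃) + γ * d₃)
    (h3 : z 3 = -(γ * d₄))
    (hcase : 1 ≤ γ ∨ (γ = 0 ∧ 1 ≤ β) ∨ (γ = 0 ∧ β = 0 ∧ 1 ≤ α)) :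
    reducesOne ![b₁, -b₂, 0, 0] z ∨ reducesOne ![c₁, c₂, -c₃, 0] z ∨
      reducesOne ![d₁, d₂, d₃, -d₄] z := by
  rcases hcase with hγ | ⟨hγ, hβ⟩ | ⟨hγ, hβ, hα⟩
  · rcases le_or_gt β (-1) with hβ | hβ
    · rcases hC with hC1 | hC2
      · have hz2 : c₃ ≤ z 2 := by
          have t1 := aux_mul_le_neg_one hβ hc₃.le
          have t2 := mul_nonneg (by linarith : (0:ℤ) ≤ γ) hd₃
          linarith [h2]
        exact Or.inr (Or.inl (aux_LFC2 hc₁ hc₂ hC1 hz2))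
      · have hz3 : z 3 ≤ -d₄ := by
          have := aux_mul_ge_one_nonneg hγ hd₄.le; linarith [h3]
        have hz2 : d₃ ≤ z 2 := by
          have t1 := aux_mul_le_neg_one hβ hc₃.le
          have t2 := aux_mul_ge_one_nonneg hγ hd₃
          linarith [h2]
        refine Or.inr (Or.inr (aux_LFD4 hd₁ hd₂ hd₃ hz3 ?_))
        clear h0 h1 h2 h3
        simp only [Int.abs_eq_natAbs] at *; omega
    · have hβ' : 0 ≤ β := by linarith
      rcases le_or_gt 1 α with hα | hα
      · have hz0 : b₁ ≤ z 0 := by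
          have t1 := aux_mul_ge_one_nonneg hα hb₁.le
          have t2 := mul_nonneg hβ' hc₁
          have t3 := mul_nonneg (by linarith : (0:ℤ) ≤ γ) hd₁
          linarith [h0]
        exact Or.inl (aux_LF1 hb₂ hb12 hz0)
      · have hα' : α ≤ 0 := by linarith
        have hz1 : d₂ ≤ z 1 := by
          have t1 : 0 ≤ -(α * b₂) := by
            have := mul_nonpos_of_nonpos_of_nonneg hα' hb₂.le; linarith
          have t2 := mul_nonneg hβ' hc₂
          have t3 := aux_mul_ge_one_nonneg hγ hd₂
          linarith [h1]
        have hz3 : z 3 ≤ -d₄ := by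
          have := aux_mul_ge_one_nonneg hγ hd₄.le; linarith [h3]
        rcases le_or_gt d₃ (z 2) with hz2 | hz2
        · have hd' : d₁ < d₂ + d₃ + d₄ := by
            rcases hB with ⟨hc10, hc32⟩ | hB2
            · rcases hC with hC1 | hC2 <;> omega
            · omega
          refine Or.inr (Or.inr (aux_LFD4 hd₁ hd₂ hd₃ hz3 ?_))
          clear h0 h1 h2 h3
          simp only [Int.abs_eq_natAbs] at *; omega
        · have hβ1 : 1 ≤ β := by
            by_contra hb
            have hβ0 : β = 0 := by omega
            rw [hβ0] at h2
            have := aux_mul_ge_one_nonneg hγ hd₃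
            simp at h2
            omega
          rcases hB with ⟨hc10, hc32⟩ | hB2
          · have hzc : c₂ ≤ z 1 := by
              have t1 : 0 ≤ -(α * b₂) := by
                have := mul_nonpos_of_nonpos_of_nonneg hα' hb₂.le; linarith
              have t2 := aux_mul_ge_one_nonneg hβ1 hc₂
              have t3 := mul_nonneg (by linarith : (0:ℤ) ≤ γ) hd₂
              linarith [h1]
            exact Or.inr (Or.inl (aux_LFC1 hc10 hc₃ hc32 hzc))
          · refine Or.inr (Or.inr (aux_LFD4 hd₁ hd₂ hd₃ hz3 ?_))
            clear h0 h1 h2 h3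
            simp only [Int.abs_eq_natAbs] at *; omega
  · subst hγ
    rcases le_or_gt 1 α with hα | hα
    · have hz0 : b₁ ≤ z 0 := by
        have t1 := aux_mul_ge_one_nonneg hα hb₁.le
        have t2 := mul_nonneg (by linarith : (0:ℤ) ≤ β) hc₁
        simp at h0
        linarith [h0]
      exact Or.inl (aux_LF1 hb₂ hb12 hz0)
    · have hα' : α ≤ 0 := by linarith
      have hz2 : z 2 ≤ -c₃ := by
        have := aux_mul_ge_one_nonneg hβ hc₃.le
        simp at h2
        linarith [h2]
      have hz1 : c₂ ≤ z 1 := by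
        have t1 : 0 ≤ -(α * b₂) := by
          have := mul_nonpos_of_nonpos_of_nonneg hα' hb₂.le; linarith
        have t2 := aux_mul_ge_one_nonneg hβ hc₂
        simp at h1
        linarith [h1]
      refine Or.inr (Or.inl (aux_LFC4 hc₁ hc₂ hz2 ?_))
      clear h0 h1 h2 h3
      simp only [Int.abs_eq_natAbs] at *; omega
  · subst hγ; subst hβ
    have hz0 : b₁ ≤ z 0 := by
      have t1 := aux_mul_ge_one_nonneg hα hb₁.le
      simp at h0
      linarith [h0]
    exact Or.inl (aux_LF1 hb₂ hb12 hz0)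

lemma aux_key {b₁ b₂ c₁ c₂ c₃ d₁ d₂ d₃ d₄ : ℤ}
    (hb₁ : 0 < b₁) (hb₂ : 0 < b₂) (hc₃ : 0 < c₃) (hd₄ : 0 < d₄)
    (hc₁ : 0 ≤ c₁) (hc₂ : 0 ≤ c₂) (hd₁ : 0 ≤ d₁) (hd₂ : 0 ≤ d₂) (hd₃ : 0 ≤ d₃)
    (hb12 : b₂ < b₁)
    (hA : c₁ < c₂ + c₃)
    (hB : (c₁ = 0 ∧ c₃ < c₂) ∨ d₁ + d₃ < d₂ + d₄)
    (hC : c₁ + c₂ < c₃ ∨ d₁ + d₂ < d₃ + d₄)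
    (α β γ : ℤ) (z : Fin 4 → ℤ)
    (h0 : z 0 = α * b₁ + β * c₁ + γ * d₁)
    (h1 : z 1 = -(α * b₂) + β * c₂ + γ * d₂)
    (h2 : z 2 = -(β * c₃) + γ * d₃)
    (h3 : z 3 = -(γ * d₄))
    (hz : z ≠ 0) :
    reducesOne ![b₁, -b₂, 0, 0] z ∨ reducesOne ![c₁, c₂, -c₃, 0] z ∨
      reducesOne ![d₁, d₂, d₃, -d₄] z := by
  have hneg :
      (reducesOne ![b₁, -b₂, 0, 0] (-z) ∨ reducesOne ![c₁, c₂, -c₃, 0] (-z) ∨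
        reducesOne ![d₁, d₂, d₃, -d₄] (-z)) →
      reducesOne ![b₁, -b₂, 0, 0] z ∨ reducesOne ![c₁, c₂, -c₃, 0] z ∨
        reducesOne ![d₁, d₂, d₃, -d₄] z := by
    intro h
    rcases h with h | h | h
    · exact Or.inl (aux_reducesOne_neg h)
    · exact Or.inr (Or.inl (aux_reducesOne_neg h))
    · exact Or.inr (Or.inr (aux_reducesOne_neg h))
  have h0' : (-z) 0 = (-α) * b₁ + (-β) * c₁ + (-γ) * d₁ := by
    simp only [Pi.neg_apply]; rw [h0]; ring
  have h1' : (-z) 1 = -((-α) * b₂) + (-β) * c₂ + (-γ) * d₂ := by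
    simp only [Pi.neg_apply]; rw [h1]; ring
  have h2' : (-z) 2 = -((-β) * c₃) + (-γ) * d₃ := by
    simp only [Pi.neg_apply]; rw [h2]; ring
  have h3' : (-z) 3 = -((-γ) * d₄) := by
    simp only [Pi.neg_apply]; rw [h3]; ring
  rcases lt_trichotomy γ 0 with hγ | hγ | hγ
  · exact hneg (aux_keyHalf hb₁ hb₂ hc₃ hd₄ hc₁ hc₂ hd₁ hd₂ hd₃ hb12 hA hB hC
      (-α) (-β) (-γ) (-z) h0' h1' h2' h3' (Or.inl (by omega)))
  · subst hγ
    rcases lt_trichotomy β 0 with hβ | hβ | hβ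
    · exact hneg (aux_keyHalf hb₁ hb₂ hc₃ hd₄ hc₁ hc₂ hd₁ hd₂ hd₃ hb12 hA hB hC
        (-α) (-β) (-(0:ℤ)) (-z) h0' h1' h2' h3' (Or.inr (Or.inl ⟨by ring, by omega⟩)))
    · subst hβ
      rcases lt_trichotomy α 0 with hα | hα | hα
      · exact hneg (aux_keyHalf hb₁ hb₂ hc₃ hd₄ hc₁ hc₂ hd₁ hd₂ hd₃ hb12 hA hB hC
          (-α) (-(0:ℤ)) (-(0:ℤ)) (-z) h0' h1' h2' h3'
          (Or.inr (Or.inr ⟨by ring, by ring, by omega⟩)))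
      · subst hα
        exfalso
        apply hz
        funext i
        fin_cases i <;> simp_all
      · exact aux_keyHalf hb₁ hb₂ hc₃ hd₄ hc₁ hc₂ hd₁ hd₂ hd₃ hb12 hA hB hC
          α 0 0 z h0 h1 h2 h3 (Or.inr (Or.inr ⟨rfl, rfl, by omega⟩))
    · exact aux_keyHalf hb₁ hb₂ hc₃ hd₄ hc₁ hc₂ hd₁ hd₂ hd₃ hb12 hA hB hC
        α β 0 z h0 h1 h2 h3 (Or.inr (Or.inl ⟨rfl, by omega⟩))
  · exact aux_keyHalf hb₁ hb₂ hc₃ hd₄ hc₁ hc₂ hd₁ hd₂ hd₃ hb12 hA hB hC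
      α β γ z h0 h1 h2 h3 (Or.inl (by omega))

lemma aux_tele {m : ℕ} : ∀ (k : ℕ) (f : Fin (k + 1) → Fin m → ℤ),
    f (Fin.last k) - f 0 = ∑ i : Fin k, (f i.succ - f i.castSucc) := by
  intro k
  induction k with
  | zero => intro f; simp
  | succ k ih =>
    intro f
    rw [Fin.sum_univ_castSucc]
    have h := ih (fun i => f i.castSucc)
    simp only [← Fin.succ_castSucc] at h
    rw [← h, Fin.succ_last, Fin.castSucc_zero]
    abel

lemma aux_span_of_connects {m : ℕ} {M : Set (Fin m → ℤ)} {x y : Fin m → ℤ}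
    (h : connects M x y) : y - x ∈ Submodule.span ℤ M := by
  obtain ⟨k, f, hf0, hfl, -, hstep⟩ := h
  rw [← hf0, ← hfl, aux_tele k f]
  apply Submodule.sum_mem
  intro i _
  rcases hstep i with hm | hm
  · exact Submodule.subset_span hm
  · have h2 : -(f i.succ - f i.castSucc) ∈ M := by
      simpa [Set.mem_neg] using hm
    simpa using Submodule.neg_mem _ (Submodule.subset_span h2)

set_option maxHeartbeats 4000000 in
/-- dimension 4 complete intersection of type (((a₁∘a₂)∘a₃)∘a₄). -/
theorem dim4_markov_basis_type211 (a : Fin 4 → ℕ) (ha : ∀ i, 0 < a i)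
    (hfk : firstKind a)
    (b₁ b₂ c₁ c₂ c₃ d₁ d₂ d₃ d₄ : ℤ)
    (hb₁ : 0 < b₁) (hb₂ : 0 < b₂) (hc₃ : 0 < c₃) (hd₄ : 0 < d₄)
    (hc₁ : 0 ≤ c₁) (hc₂ : 0 ≤ c₂) (hd₁ : 0 ≤ d₁) (hd₂ : 0 ≤ d₂) (hd₃ : 0 ≤ d₃)
    (hb12 : b₂ < b₁)
    (M : Set (Fin 4 → ℤ))
    (hMdef : M = {![b₁, -b₂, 0, 0], ![c₁, c₂, -c₃, 0], ![d₁, d₂, d₃, -d₄]})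
    (hmark : isMinimalMarkov a M) :
    distanceReducing (kerV a) M ↔
      (c₁ < c₂ + c₃) ∧
      ((c₁ = 0 ∧ c₃ < c₂) ∨ d₁ + d₃ < d₂ + d₄) ∧
      (c₁ + c₂ < c₃ ∨ d₁ + d₂ < d₃ + d₄) := by
  subst hMdef
  constructor
  · intro hdr
    have hker := hmark.1.1
    have hA0 : (0:ℤ) < (a 0 : ℤ) := by exact_mod_cast ha 0
    have hA1 : (0:ℤ) < (a 1 : ℤ) := by exact_mod_cast ha 1
    have hA2 : (0:ℤ) < (a 2 : ℤ) := by exact_mod_cast ha 2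
    have hA3 : (0:ℤ) < (a 3 : ℤ) := by exact_mod_cast ha 3
    have hkc : (a 0 : ℤ) * c₁ + (a 1 : ℤ) * c₂ = (a 2 : ℤ) * c₃ := by
      have h := hker (show (![c₁, c₂, -c₃, 0] : Fin 4 → ℤ) ∈ _ by simp)
      simp only [kerV, Set.mem_setOf_eq, Fin.sum_univ_four, Matrix.cons_val_zero,
        Matrix.cons_val_one, Matrix.head_cons, Matrix.cons_val_two, Matrix.tail_cons,
        Matrix.cons_val_three] at h
      linarith
    have hkd : (a 0 : ℤ) * d₁ + (a 1 : ℤ) * d₂ + (a 2 : ℤ) * d₃ = (a 3 : ℤ) * d₄ := by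
      have h := hker (show (![d₁, d₂, d₃, -d₄] : Fin 4 → ℤ) ∈ _ by simp)
      simp only [kerV, Set.mem_setOf_eq, Fin.sum_univ_four, Matrix.cons_val_zero,
        Matrix.cons_val_one, Matrix.head_cons, Matrix.cons_val_two, Matrix.tail_cons,
        Matrix.cons_val_three] at h
      linarith
    have hc12 : 1 ≤ c₁ ∨ 1 ≤ c₂ := by
      by_contra hcc
      push_neg at hcc
      have e1 : c₁ = 0 := by omega
      have e2 : c₂ = 0 := by omega
      rw [e1, e2] at hkc
      nlinarith [mul_pos hA2 hc₃]
    have hd123 : 1 ≤ d₁ ∨ 1 ≤ d₂ ∨ 1 ≤ d₃ := by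
      by_contra hcc
      push_neg at hcc
      have e1 : d₁ = 0 := by omega
      have e2 : d₂ = 0 := by omega
      have e3 : d₃ = 0 := by omega
      rw [e1, e2, e3] at hkd
      nlinarith [mul_pos hA3 hd₄]
    refine ⟨?_, ?_, ?_⟩
    · -- condition (a): c₁ < c₂ + c₃
      by_contra hcon
      push_neg at hcon
      by_cases hbad : d₁ = 0 ∧ d₃ = 0 ∧ d₄ < d₂
      · obtain ⟨e1, e3, hdd⟩ := hbad
        subst e1; subst e3
        have hd24 : (a 1 : ℤ) * d₂ = (a 3 : ℤ) * d₄ := by linarith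
        have hk0 : 0 ≤ (a 2 : ℤ) / d₂ := Int.ediv_nonneg hA2.le (by omega)
        have hdm : d₂ * ((a 2 : ℤ) / d₂) + (a 2 : ℤ) % d₂ = (a 2 : ℤ) :=
          Int.mul_ediv_add_emod _ _
        have hr0 : 0 ≤ (a 2 : ℤ) % d₂ := Int.emod_nonneg _ (by omega)
        have hrlt : (a 2 : ℤ) % d₂ < d₂ := Int.emod_lt_of_pos _ (by omega)
        set r : ℤ := (a 2 : ℤ) % d₂ with hrdef
        set t : ℤ := ((a 2 : ℤ) / d₂) * d₄ with htdef
        have ht0 : 0 ≤ t := mul_nonneg hk0 hd₄.le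
        have hzker2 : (![0, r, -(a 1 : ℤ), t] : Fin 4 → ℤ) ∈ kerV a := by
          simp only [kerV, Set.mem_setOf_eq, Fin.sum_univ_four, Matrix.cons_val_zero,
            Matrix.cons_val_one, Matrix.head_cons, Matrix.cons_val_two, Matrix.tail_cons,
            Matrix.cons_val_three, htdef, hrdef]
          linear_combination (-((a 2 : ℤ) / d₂)) * hd24 + (a 1 : ℤ) * hdm
        have hz02 : (![0, r, -(a 1 : ℤ), t] : Fin 4 → ℤ) ≠ 0 := by
          intro h
          have := congrFun h 2
          simp at this
          omega
        obtain ⟨u, hu, hone⟩ := hdr _ hzker2 hz02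
        simp only [Set.mem_insert_iff, Set.mem_singleton_iff] at hu
        simp only [reducesOne] at hone
        rcases hu with rfl | rfl | rfl <;>
        rcases hone with ⟨hv, hn⟩ | ⟨hv, hn⟩ | ⟨hv, hn⟩ | ⟨hv, hn⟩ <;>
        (simp only [vle] at hv
         have g0 := hv 0; have g1 := hv 1; have g2 := hv 2; have g3 := hv 3
         rw [aux_onorm4, aux_onorm4] at hn
         simp only [posP, negP, Pi.sub_apply, Pi.add_apply, Matrix.cons_val_zero,
           Matrix.cons_val_one, Matrix.head_cons, Matrix.cons_val_two, Matrix.tail_cons,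
           Matrix.cons_val_three] at g0 g1 g2 g3 hn
         simp only [Int.abs_eq_natAbs] at hn
         omega)
      · by_cases hbad2 : d₁ = 0 ∧ d₂ = 0 ∧ d₄ < d₃
        · obtain ⟨e1, e2, hdd⟩ := hbad2
          subst e1; subst e2
          have hd34 : (a 2 : ℤ) * d₃ = (a 3 : ℤ) * d₄ := by linarith
          have hk0 : 0 ≤ (a 1 : ℤ) / d₃ := Int.ediv_nonneg hA1.le (by omega)
          have hdm : d₃ * ((a 1 : ℤ) / d₃) + (a 1 : ℤ) % d₃ = (a 1 : ℤ) :=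
            Int.mul_ediv_add_emod _ _
          have hr0 : 0 ≤ (a 1 : ℤ) % d₃ := Int.emod_nonneg _ (by omega)
          have hrlt : (a 1 : ℤ) % d₃ < d₃ := Int.emod_lt_of_pos _ (by omega)
          set r : ℤ := (a 1 : ℤ) % d₃ with hrdef
          set t : ℤ := ((a 1 : ℤ) / d₃) * d₄ with htdef
          have ht0 : 0 ≤ t := mul_nonneg hk0 hd₄.le
          have hzker2 : (![0, (a 2 : ℤ), -r, -t] : Fin 4 → ℤ) ∈ kerV a := by
            simp only [kerV, Set.mem_setOf_eq, Fin.sum_univ_four, Matrix.cons_val_zero,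
              Matrix.cons_val_one, Matrix.head_cons, Matrix.cons_val_two, Matrix.tail_cons,
              Matrix.cons_val_three, htdef, hrdef]
            linear_combination ((a 1 : ℤ) / d₃) * hd34 - (a 2 : ℤ) * hdm
          have hz02 : (![0, (a 2 : ℤ), -r, -t] : Fin 4 → ℤ) ≠ 0 := by
            intro h
            have := congrFun h 1
            simp at this
            omega
          obtain ⟨u, hu, hone⟩ := hdr _ hzker2 hz02
          simp only [Set.mem_insert_iff, Set.mem_singleton_iff] at hu
          simp only [reducesOne] at hone
          rcases hu with rfl | rfl | rfl <;>
          rcases hone with ⟨hv, hn⟩ | ⟨hv, hn⟩ | ⟨hv, hn⟩ | ⟨hv, hn⟩ <;>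
          (simp only [vle] at hv
           have g0 := hv 0; have g1 := hv 1; have g2 := hv 2; have g3 := hv 3
           rw [aux_onorm4, aux_onorm4] at hn
           simp only [posP, negP, Pi.sub_apply, Pi.add_apply, Matrix.cons_val_zero,
             Matrix.cons_val_one, Matrix.head_cons, Matrix.cons_val_two, Matrix.tail_cons,
             Matrix.cons_val_three] at g0 g1 g2 g3 hn
           simp only [Int.abs_eq_natAbs] at hn
           omega)
        · have hzker2 : (![0, (a 2 : ℤ), -(a 1 : ℤ), 0] : Fin 4 → ℤ) ∈ kerV a := by
            simp only [kerV, Set.mem_setOf_eq, Fin.sum_univ_four, Matrix.cons_val_zero,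
              Matrix.cons_val_one, Matrix.head_cons, Matrix.cons_val_two, Matrix.tail_cons,
              Matrix.cons_val_three]
            ring
          have hz02 : (![0, (a 2 : ℤ), -(a 1 : ℤ), 0] : Fin 4 → ℤ) ≠ 0 := by
            intro h
            have := congrFun h 2
            simp at this
            omega
          obtain ⟨u, hu, hone⟩ := hdr _ hzker2 hz02
          simp only [Set.mem_insert_iff, Set.mem_singleton_iff] at hu
          simp only [reducesOne] at hone
          rcases hu with rfl | rfl | rfl <;>
          rcases hone with ⟨hv, hn⟩ | ⟨hv, hn⟩ | ⟨hv, hn⟩ | ⟨hv, hn⟩ <;>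
          (simp only [vle] at hv
           have g0 := hv 0; have g1 := hv 1; have g2 := hv 2; have g3 := hv 3
           rw [aux_onorm4, aux_onorm4] at hn
           simp only [posP, negP, Pi.sub_apply, Pi.add_apply, Matrix.cons_val_zero,
             Matrix.cons_val_one, Matrix.head_cons, Matrix.cons_val_two, Matrix.tail_cons,
             Matrix.cons_val_three] at g0 g1 g2 g3 hn
           simp only [Int.abs_eq_natAbs] at hn
           omega)
    · -- condition (b)
      by_contra hcon
      push_neg at hcon
      obtain ⟨hcon1, hcon2⟩ := hcon
      have hcon1' : c₁ ≠ 0 ∨ c₂ ≤ c₃ := by omega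
      have hzker2 : (![0, (a 3 : ℤ), 0, -(a 1 : ℤ)] : Fin 4 → ℤ) ∈ kerV a := by
        simp only [kerV, Set.mem_setOf_eq, Fin.sum_univ_four, Matrix.cons_val_zero,
          Matrix.cons_val_one, Matrix.head_cons, Matrix.cons_val_two, Matrix.tail_cons,
          Matrix.cons_val_three]
        ring
      have hz02 : (![0, (a 3 : ℤ), 0, -(a 1 : ℤ)] : Fin 4 → ℤ) ≠ 0 := by
        intro h
        have := congrFun h 3
        simp at this
        omega
      obtain ⟨u, hu, hone⟩ := hdr _ hzker2 hz02
      simp only [Set.mem_insert_iff, Set.mem_singleton_iff] at hu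
      simp only [reducesOne] at hone
      rcases hu with rfl | rfl | rfl <;>
      rcases hone with ⟨hv, hn⟩ | ⟨hv, hn⟩ | ⟨hv, hn⟩ | ⟨hv, hn⟩ <;>
      (simp only [vle] at hv
       have g0 := hv 0; have g1 := hv 1; have g2 := hv 2; have g3 := hv 3
       rw [aux_onorm4, aux_onorm4] at hn
       simp only [posP, negP, Pi.sub_apply, Pi.add_apply, Matrix.cons_val_zero,
         Matrix.cons_val_one, Matrix.head_cons, Matrix.cons_val_two, Matrix.tail_cons,
         Matrix.cons_val_three] at g0 g1 g2 g3 hn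
       simp only [Int.abs_eq_natAbs] at hn
       omega)
    · -- condition (c)
      by_contra hcon
      push_neg at hcon
      obtain ⟨hcon1, hcon2⟩ := hcon
      have hzker2 : (![0, 0, (a 3 : ℤ), -(a 2 : ℤ)] : Fin 4 → ℤ) ∈ kerV a := by
        simp only [kerV, Set.mem_setOf_eq, Fin.sum_univ_four, Matrix.cons_val_zero,
          Matrix.cons_val_one, Matrix.head_cons, Matrix.cons_val_two, Matrix.tail_cons,
          Matrix.cons_val_three]
        ring
      have hz02 : (![0, 0, (a 3 : ℤ), -(a 2 : ℤ)] : Fin 4 → ℤ) ≠ 0 := by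
        intro h
        have := congrFun h 3
        simp at this
        omega
      obtain ⟨u, hu, hone⟩ := hdr _ hzker2 hz02
      simp only [Set.mem_insert_iff, Set.mem_singleton_iff] at hu
      simp only [reducesOne] at hone
      rcases hu with rfl | rfl | rfl <;>
      rcases hone with ⟨hv, hn⟩ | ⟨hv, hn⟩ | ⟨hv, hn⟩ | ⟨hv, hn⟩ <;>
      (simp only [vle] at hv
       have g0 := hv 0; have g1 := hv 1; have g2 := hv 2; have g3 := hv 3
       rw [aux_onorm4, aux_onorm4] at hn
       simp only [posP, negP, Pi.sub_apply, Pi.add_apply, Matrix.cons_val_zero,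
         Matrix.cons_val_one, Matrix.head_cons, Matrix.cons_val_two, Matrix.tail_cons,
         Matrix.cons_val_three] at g0 g1 g2 g3 hn
       simp only [Int.abs_eq_natAbs] at hn
       omega)
  · rintro ⟨hA, hB, hC⟩ z hzker hz
    have hzk : ∑ i, (a i : ℤ) * z i = 0 := hzker
    have hpn : ∀ i, posP z i - negP z i = z i := by
      intro i; simp only [posP, negP]; omega
    have hsum : ∑ i, (a i : ℤ) * posP z i = ∑ i, (a i : ℤ) * negP z i := by
      have h1 : ∑ i, ((a i : ℤ) * posP z i - (a i : ℤ) * negP z i) = 0 := by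
        calc ∑ i, ((a i : ℤ) * posP z i - (a i : ℤ) * negP z i)
            = ∑ i, (a i : ℤ) * z i :=
              Finset.sum_congr rfl (fun i _ => by rw [← mul_sub, hpn i])
          _ = 0 := hzk
      rw [Finset.sum_sub_distrib] at h1
      linarith
    have hcon := hmark.1.2 (posP z) (negP z) (fun j => le_max_right _ _)
      (fun j => le_max_right _ _) hsum
    have hspan := aux_span_of_connects hcon
    have hzmem : z ∈ Submodule.span ℤ
        ({![b₁, -b₂, 0, 0], ![c₁, c₂, -c₃, 0], ![d₁, d₂, d₃, -d₄]} : Set (Fin 4 → ℤ)) := by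
      have h2 := Submodule.neg_mem _ hspan
      have h3 : -(negP z - posP z) = z := by
        funext i; simp only [Pi.neg_apply, Pi.sub_apply, posP, negP]; omega
      rwa [h3] at h2
    rcases Submodule.mem_span_insert.mp hzmem with ⟨α, w, hw, hzw⟩
    rcases Submodule.mem_span_insert.mp hw with ⟨β, w2, hw2, hww⟩
    rcases Submodule.mem_span_singleton.mp hw2 with ⟨γ, hgg⟩
    rw [hww, ← hgg] at hzw
    have h0 : z 0 = α * b₁ + β * c₁ + γ * d₁ := by
      have e := congrFun hzw 0
      simp only [Pi.add_apply, Pi.smul_apply, smul_eq_mul, Matrix.cons_val_zero] at e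
      linarith
    have h1 : z 1 = -(α * b₂) + β * c₂ + γ * d₂ := by
      have e := congrFun hzw 1
      simp only [Pi.add_apply, Pi.smul_apply, smul_eq_mul, Matrix.cons_val_one,
        Matrix.head_cons, Matrix.cons_val_zero] at e
      rw [e]; ring
    have h2 : z 2 = -(β * c₃) + γ * d₃ := by
      have e := congrFun hzw 2
      simp only [Pi.add_apply, Pi.smul_apply, smul_eq_mul, Matrix.cons_val_two,
        Matrix.tail_cons, Matrix.head_cons] at e
      rw [e]; ring
    have h3 : z 3 = -(γ * d₄) := by
      have e := congrFun hzw 3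
      simp only [Pi.add_apply, Pi.smul_apply, smul_eq_mul, Matrix.cons_val_three,
        Matrix.tail_cons, Matrix.head_cons] at e
      rw [e]; ring
    rcases aux_key hb₁ hb₂ hc₃ hd₄ hc₁ hc₂ hd₁ hd₂ hd₃ hb12 hA hB hC α β γ z
        h0 h1 h2 h3 hz with h | h | h
    · exact ⟨_, by simp, h⟩
    · exact ⟨_, by simp, h⟩
    · exact ⟨_, by simp, h⟩

end DistRed
end

section
/- Let A be a d×n integer matrix such that the only vector in ker(A) with all coordinates nonnegative is 0. If B ⊆ ker(A) is distance reducing, then every z ∈ D(A) satisfies z ∈ B or −z ∈ B. If B is strongly distance reducing, then every z ∈ D^w(A) satisfies z ∈ B or −z ∈ B. -/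
open Pointwise

namespace DistRed

variable {n d : ℕ}

lemma posP_neg (u : Fin n → ℤ) : posP (-u) = negP u := by
  funext i; simp [posP, negP]

lemma negP_neg (u : Fin n → ℤ) : negP (-u) = posP u := by
  funext i; simp [posP, negP]

lemma ker_sub {A : Matrix (Fin d) (Fin n) ℤ} {x y : Fin n → ℤ}
    (hx : x ∈ kerM A) (hy : y ∈ kerM A) : x - y ∈ kerM A := by
  simp only [kerM, Set.mem_setOf_eq] at *
  rw [Matrix.mulVec_sub, hx, hy, sub_self]

lemma ker_neg {A : Matrix (Fin d) (Fin n) ℤ} {x : Fin n → ℤ}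
    (hx : x ∈ kerM A) : -x ∈ kerM A := by
  simp only [kerM, Set.mem_setOf_eq] at *
  rw [Matrix.mulVec_neg, hx, neg_zero]

lemma keyPos {A : Matrix (Fin d) (Fin n) ℤ} {z u : Fin n → ℤ}
    (hz : z ∈ kerM A) (hu : u ∈ kerM A)
    (hle : vle (posP u) (posP z)) (hn : onorm (z - u) < onorm z)
    (hnd : ¬ posDD (kerM A) z) : z = u := by
  by_contra h
  apply hnd
  refine ⟨u, z - u, hu, ker_sub hz hu, ?_, ?_, by abel, hle, hn⟩
  · rintro rfl; simp at hn
  · intro h0; rw [sub_eq_zero] at h0; exact h h0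

lemma keyNeg {A : Matrix (Fin d) (Fin n) ℤ} {z u : Fin n → ℤ}
    (hz : z ∈ kerM A) (hu : u ∈ kerM A)
    (hle : vle (negP u) (negP z)) (hn : onorm (z - u) < onorm z)
    (hnd : ¬ negDD (kerM A) z) : z = u := by
  by_contra h
  apply hnd
  refine ⟨u, z - u, hu, ker_sub hz hu, ?_, ?_, by abel, hle, hn⟩
  · rintro rfl; simp at hn
  · intro h0; rw [sub_eq_zero] at h0; exact h h0

lemma keyPos' {A : Matrix (Fin d) (Fin n) ℤ} {z u : Fin n → ℤ}
    (hz : z ∈ kerM A) (hu : u ∈ kerM A)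
    (hle : vle (negP u) (posP z)) (hn : onorm (z + u) < onorm z)
    (hnd : ¬ posDD (kerM A) z) : z = -u := by
  apply keyPos hz (ker_neg hu)
  · rw [posP_neg]; exact hle
  · rw [sub_neg_eq_add]; exact hn
  · exact hnd

lemma keyNeg' {A : Matrix (Fin d) (Fin n) ℤ} {z u : Fin n → ℤ}
    (hz : z ∈ kerM A) (hu : u ∈ kerM A)
    (hle : vle (posP u) (negP z)) (hn : onorm (z + u) < onorm z)
    (hnd : ¬ negDD (kerM A) z) : z = -u := by
  apply keyNeg hz (ker_neg hu)
  · rw [negP_neg]; exact hle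
  · rw [sub_neg_eq_add]; exact hn
  · exact hnd

/-- every (weakly) distance irreducible element belongs, up to sign,
to every (strongly) distance reducing set. -/
theorem dist_irreducibles_mem_reducing {d n : ℕ} (A : Matrix (Fin d) (Fin n) ℤ)
    (hker : ∀ u ∈ kerM A, (∀ i, 0 ≤ u i) → u = 0)
    (B : Set (Fin n → ℤ)) (hB : B ⊆ kerM A) :
    (distanceReducing (kerM A) B → ∀ z ∈ Dboth (kerM A), z ∈ B ∨ -z ∈ B) ∧
    (stronglyDistanceReducing (kerM A) B → ∀ z ∈ Dweak (kerM A), z ∈ B ∨ -z ∈ B) := by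
  constructor
  · intro hred z hz
    obtain ⟨⟨hzK, hz0, hnp⟩, ⟨_, _, hnn⟩⟩ := hz
    obtain ⟨u, huB, hcase⟩ := hred z hzK hz0
    rcases hcase with ⟨h1, h2⟩ | ⟨h1, h2⟩ | ⟨h1, h2⟩ | ⟨h1, h2⟩
    · exact Or.inl ((keyPos hzK (hB huB) h1 h2 hnp) ▸ huB)
    · refine Or.inr ?_
      have := keyPos' hzK (hB huB) h1 h2 hnp
      rw [this, neg_neg]; exact huB
    · refine Or.inr ?_
      have := keyNeg' hzK (hB huB) h1 h2 hnn
      rw [this, neg_neg]; exact huB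
    · exact Or.inl ((keyNeg hzK (hB huB) h1 h2 hnn) ▸ huB)
  · intro hred z hz
    rcases hz with ⟨hzK, hz0, hnp⟩ | ⟨hzK, hz0, hnn⟩
    · obtain ⟨⟨u, huB, hcase⟩, _⟩ := hred z hzK hz0
      rcases hcase with ⟨h1, h2⟩ | ⟨h1, h2⟩
      · exact Or.inl ((keyPos hzK (hB huB) h1 h2 hnp) ▸ huB)
      · refine Or.inr ?_
        have := keyPos' hzK (hB huB) h1 h2 hnp
        rw [this, neg_neg]; exact huB
    · obtain ⟨_, ⟨u, huB, hcase⟩⟩ := hred z hzK hz0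
      rcases hcase with ⟨h1, h2⟩ | ⟨h1, h2⟩
      · refine Or.inr ?_
        have := keyNeg' hzK (hB huB) h1 h2 hnn
        rw [this, neg_neg]; exact huB
      · exact Or.inl ((keyNeg hzK (hB huB) h1 h2 hnn) ▸ huB)

end DistRed
end

section
/- Let A be a d×n integer matrix such that the only vector in ker(A) with all coordinates nonnegative is 0. Then the following chain of inclusions holds: S(A) ⊆ D(A) ⊆ D^w(A) ⊆ G(A). -/
open Pointwise

namespace DistRed

variable {n d : ℕ}

lemma onorm_pos {n : ℕ} {u : Fin n → ℤ} (hu : u ≠ 0) : 0 < onorm u := by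
  obtain ⟨i, hi⟩ := Function.ne_iff.mp hu
  have h1 : 0 < |u i| := abs_pos.mpr hi
  have h2 : |u i| ≤ onorm u :=
    Finset.single_le_sum (fun j _ => abs_nonneg (u j)) (Finset.mem_univ i)
  linarith

lemma abs_eq_pos_add_neg {n : ℕ} (w : Fin n → ℤ) (i : Fin n) :
    |w i| = posP w i + negP w i := by
  simp only [posP, negP]
  rcases le_total 0 (w i) with h | h
  · rw [abs_of_nonneg h, max_eq_left h, max_eq_right (by omega)]; ring
  · rw [abs_of_nonpos h, max_eq_right h, max_eq_left (by omega)]; ring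

/-- S(A) ⊆ D(A) ⊆ D^w(A) ⊆ G(A). -/
theorem dist_irred_chain_inclusions {d n : ℕ} (A : Matrix (Fin d) (Fin n) ℤ)
    (hker : ∀ u ∈ kerM A, (∀ i, 0 ≤ u i) → u = 0) :
    indisp (kerM A) ⊆ Dboth (kerM A) ∧
    Dboth (kerM A) ⊆ Dweak (kerM A) ∧
    Dweak (kerM A) ⊆ graver (kerM A) := by
  refine ⟨?_, fun z hz => Or.inl hz.1, ?_⟩
  · rintro z ⟨hzK, hz0, hns⟩
    constructor
    · refine ⟨hzK, hz0, ?_⟩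
      rintro ⟨u, v, hu, hv, hu0, hv0, hzuv, hle, -⟩
      refine hns ⟨u, v, hu, hv, hu0, hv0, hzuv, fun i hui => ?_⟩
      have h := hle i
      simp only [posP] at h
      have h1 : u i ≤ max (z i) 0 := le_trans (le_max_left (u i) 0) h
      have h2 : u i ≤ z i := by
        rcases le_or_gt (z i) 0 with hc | hc
        · rw [max_eq_right hc] at h1; omega
        · rwa [max_eq_left hc.le] at h1
      have hz' : z i = u i + v i := by rw [hzuv]; rfl
      omega
    · refine ⟨hzK, hz0, ?_⟩
      rintro ⟨u, v, hu, hv, hu0, hv0, hzuv, hle, -⟩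
      refine hns ⟨v, u, hv, hu, hv0, hu0, by rw [hzuv, add_comm], fun i hvi => ?_⟩
      by_contra hneg
      push_neg at hneg
      have h := hle i
      simp only [negP] at h
      have h1 : -u i ≤ max (-z i) 0 := le_trans (le_max_left (-u i) 0) h
      have h2 : z i ≤ u i := by
        rcases le_or_gt (-z i) 0 with hc | hc
        · rw [max_eq_right hc] at h1; omega
        · rw [max_eq_left hc.le] at h1; omega
      have hz' : z i = u i + v i := by rw [hzuv]; rfl
      omega
  · rintro z hz
    have hzK : z ∈ kerM A := hz.elim (fun h => h.1) (fun h => h.1)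
    have hz0 : z ≠ 0 := hz.elim (fun h => h.2.1) (fun h => h.2.1)
    refine ⟨hzK, hz0, ?_⟩
    rintro ⟨u, v, hu, hv, hu0, hv0, hzuv, hp, hn⟩
    have hpv : ∀ i, 0 ≤ posP v i := fun i => le_max_right _ _
    have hnv : ∀ i, 0 ≤ negP v i := fun i => le_max_right _ _
    have hlep : vle (posP u) (posP z) := fun i => by
      have := congrFun hp i; have := hpv i
      simp only [Pi.add_apply] at *; linarith
    have hlen : vle (negP u) (negP z) := fun i => by
      have := congrFun hn i; have := hnv i
      simp only [Pi.add_apply] at *; linarith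
    have hnorm : onorm z = onorm u + onorm v := by
      simp only [onorm]
      rw [← Finset.sum_add_distrib]
      refine Finset.sum_congr rfl fun i _ => ?_
      rw [abs_eq_pos_add_neg z i, abs_eq_pos_add_neg u i, abs_eq_pos_add_neg v i,
        congrFun hp i, congrFun hn i]
      simp only [Pi.add_apply]; ring
    have hlt : onorm v < onorm z := by
      have := onorm_pos hu0; linarith
    rcases hz with h | h
    · exact h.2.2 ⟨u, v, hu, hv, hu0, hv0, hzuv, hlep, hlt⟩
    · exact h.2.2 ⟨u, v, hu, hv, hu0, hv0, hzuv, hlen, hlt⟩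


end DistRed
end
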